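/- arXiv:2410.18595 — 5 statements merged into one kernel-verified Lean document; each statement's English description precedes it below -/
import Mathlib

section
/- In a c.c.c. Boolean algebra B, the set Part(B) of maximal antichains equipped with the almost refinement relation ≤* is a directed preorder. -/
/-- A relational system `⟨A₋, A, A₊⟩`. -/
structure RelSys : Type 1 where
  Dom : Type
  Cod : Type
  Rel : Dom → Cod → Prop

/-- The dominating number `𝔡(A)` of a relational system. -/
noncomputable def dNum (S : RelSys) : Cardinal :=
  sInf { c | ∃ Y : Set S.Cod, Cardinal.mk Y = c ∧ ∀ x : S.Dom, ∃ y ∈ Y, S.Rel x y }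

/-- The bounding number `𝔟(A)` of a relational system. -/
noncomputable def bNum (S : RelSys) : Cardinal :=
  sInf { c | ∃ X : Set S.Dom, Cardinal.mk X = c ∧ ∀ y : S.Cod, ∃ x ∈ X, ¬ S.Rel x y }

/-- A generalized Galois–Tukey connection from `S` to `T` (`S ≤_T T`). -/
def GT (S T : RelSys) : Prop :=
  ∃ (φm : S.Dom → T.Dom) (φp : T.Cod → S.Cod),
    ∀ a b, T.Rel (φm a) b → S.Rel a (φp b)

/-- Galois–Tukey equivalence. -/
def GTequiv (S T : RelSys) : Prop := GT S T ∧ GT T S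

/-- The σ-version `A^σ` of a relational system. -/
def sigmaSys (S : RelSys) : RelSys :=
  ⟨S.Dom, ℕ → S.Cod, fun a f => ∃ n, S.Rel a (f n)⟩

/-- Sequential composition `A;B` of relational systems. -/
def seqComp (S T : RelSys) : RelSys :=
  ⟨S.Dom × (S.Cod → T.Dom), S.Cod × T.Cod,
   fun p q => S.Rel p.1 q.1 ∧ T.Rel (p.2 q.1) q.2⟩

/-- An antichain in a Boolean algebra: pairwise disjoint nonzero elements. -/
def BAAntichain {α : Type} [BooleanAlgebra α] (A : Set α) : Prop :=
  (∀ a ∈ A, a ≠ ⊥) ∧ ∀ a ∈ A, ∀ b ∈ A, a ≠ b → a ⊓ b = ⊥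

/-- A maximal antichain in a Boolean algebra. -/
def MaxAC {α : Type} [BooleanAlgebra α] (A : Set α) : Prop :=
  BAAntichain A ∧ ∀ b : α, b ≠ ⊥ → ∃ a ∈ A, a ⊓ b ≠ ⊥

/-- The countable chain condition. -/
def CCC (α : Type) [BooleanAlgebra α] : Prop :=
  ∀ A : Set α, BAAntichain A → A.Countable

/-- `C` refines `A` (written `A ≤ C`): every element of `C` is below some element of `A`. -/
def Refines {α : Type} [BooleanAlgebra α] (A C : Set α) : Prop :=
  ∀ c ∈ C, ∃ a ∈ A, c ≤ a

/-- `C` almost refines `A` (written `A ≤* C`). -/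
def AlmostRefines {α : Type} [BooleanAlgebra α] (A C : Set α) : Prop :=
  ∃ F : Finset α, ↑F ⊆ A ∧ Refines ((A \ ↑F) ∪ {F.sup id}) C

/-- The set of maximal antichains of `α`. -/
def PartT (α : Type) [BooleanAlgebra α] : Type := {A : Set α // MaxAC A}

/-- The refinement relational system `Part(α)`. -/
def PartSys (α : Type) [BooleanAlgebra α] : RelSys :=
  ⟨PartT α, PartT α, fun A C => Refines A.1 C.1⟩

/-- The almost-refinement relational system `Part*(α)`. -/
def PartStar (α : Type) [BooleanAlgebra α] : RelSys :=
  ⟨PartT α, PartT α, fun A C => AlmostRefines A.1 C.1⟩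

/-- The eventual domination relational system `(ωω, ≤*, ωω)`. -/
def domSys : RelSys :=
  ⟨ℕ → ℕ, ℕ → ℕ, fun f g => ∀ᶠ n in Filter.atTop, f n ≤ g n⟩

lemma refines_of_subrefines {α : Type} [BooleanAlgebra α] {A C : Set α}
    (h : Refines A C) : AlmostRefines A C := by
  refine ⟨∅, by simp, fun c hc => ?_⟩
  obtain ⟨a, ha, hca⟩ := h c hc
  exact ⟨a, Or.inl ⟨ha, by simp⟩, hca⟩

/-- In a c.c.c. Boolean algebra, `(Part(B), ≤*)` is a directed preorder. -/
theorem stmt5 (α : Type) [BooleanAlgebra α] (hccc : CCC α) :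
    (∀ A : PartT α, AlmostRefines A.1 A.1) ∧
    (∀ A B C : PartT α,
      AlmostRefines A.1 B.1 → AlmostRefines B.1 C.1 → AlmostRefines A.1 C.1) ∧
    (∀ A B : PartT α, ∃ C : PartT α, AlmostRefines A.1 C.1 ∧ AlmostRefines B.1 C.1) := by
  classical
  refine ⟨?_, ?_, ?_⟩
  · intro A
    exact refines_of_subrefines (fun c hc => ⟨c, hc, le_rfl⟩)
  · rintro ⟨A, hA⟩ ⟨B, hB⟩ ⟨C, hC⟩ ⟨F, hFA, hFref⟩ ⟨G, hGB, hGref⟩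
    -- choice function for elements of G
    have hchoice : ∀ g ∈ B, ∃ a ∈ (A \ ↑F) ∪ {F.sup id}, g ≤ a := hFref
    choose! f hf1 hf2 using hchoice
    set H : Finset α := F ∪ (G.image f).filter (fun x => x ∈ A) with hHdef
    have hHA : ↑H ⊆ A := by
      intro x hx
      simp only [hHdef, Finset.coe_union, Set.mem_union, Finset.coe_filter,
        Set.mem_setOf_eq] at hx
      rcases hx with hx | ⟨_, hx⟩
      · exact hFA hx
      · exact hx
    have hFH : F.sup id ≤ H.sup id :=
      Finset.sup_mono (Finset.subset_union_left)
    have hGH : ∀ g ∈ G, g ≤ H.sup id := by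
      intro g hg
      have hgB : g ∈ B := hGB hg
      have h1 := hf1 g hgB
      have h2 := hf2 g hgB
      rcases h1 with ⟨hfA, hfF⟩ | h1
      · have : f g ∈ H := by
          apply Finset.mem_union_right
          exact Finset.mem_filter.mpr ⟨Finset.mem_image_of_mem f hg, hfA⟩
        exact h2.trans (Finset.le_sup (f := id) this)
      · rw [Set.mem_singleton_iff] at h1
        rw [h1] at h2
        exact h2.trans hFH
    refine ⟨H, hHA, fun c hc => ?_⟩
    obtain ⟨b, hb, hcb⟩ := hGref c hc
    rcases hb with ⟨hbB, hbG⟩ | hb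
    · -- b ∈ B \ G
      obtain hfa1 := hf1 b hbB
      have hfa2 := hf2 b hbB
      rcases hfa1 with ⟨hfA, hfF⟩ | hfa1
      · by_cases hmem : f b ∈ H
        · exact ⟨H.sup id, Or.inr rfl, hcb.trans (hfa2.trans (Finset.le_sup (f := id) hmem))⟩
        · exact ⟨f b, Or.inl ⟨hfA, hmem⟩, hcb.trans hfa2⟩
      · rw [Set.mem_singleton_iff] at hfa1
        rw [hfa1] at hfa2
        exact ⟨H.sup id, Or.inr rfl, hcb.trans (hfa2.trans hFH)⟩
    · rw [Set.mem_singleton_iff] at hb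
      subst hb
      refine ⟨H.sup id, Or.inr rfl, hcb.trans (Finset.sup_le hGH)⟩
  · rintro ⟨A, hA⟩ ⟨B, hB⟩
    set C : Set α := {x | ∃ a ∈ A, ∃ b ∈ B, x = a ⊓ b ∧ x ≠ ⊥} with hCdef
    have hCmax : MaxAC C := by
      refine ⟨⟨by rintro x ⟨_, _, _, _, _, h⟩; exact h, ?_⟩, ?_⟩
      · rintro x ⟨a, haA, b, hbB, hxe, hxne⟩ y ⟨a', haA', b', hbB', hye, hyne⟩ hxy
        have hab : a ≠ a' ∨ b ≠ b' := by
          by_contra h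
          push_neg at h
          exact hxy (by rw [hxe, hye, h.1, h.2])
        rcases hab with h | h
        · have : x ⊓ y ≤ a ⊓ a' := by
            rw [hxe, hye]
            exact inf_le_inf inf_le_left inf_le_left
          rw [hA.1.2 a haA a' haA' h] at this
          exact le_bot_iff.mp this
        · have : x ⊓ y ≤ b ⊓ b' := by
            rw [hxe, hye]
            exact inf_le_inf inf_le_right inf_le_right
          rw [hB.1.2 b hbB b' hbB' h] at this
          exact le_bot_iff.mp this
      · intro x hx
        obtain ⟨a, haA, hax⟩ := hA.2 x hx
        obtain ⟨b, hbB, hbax⟩ := hB.2 (a ⊓ x) hax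
        have key : (a ⊓ b) ⊓ x ≠ ⊥ := by
          intro h
          apply hbax
          rw [← h]
          ac_rfl
        have habne : a ⊓ b ≠ ⊥ := by
          intro h
          exact key (by rw [h, bot_inf_eq])
        exact ⟨a ⊓ b, ⟨a, haA, b, hbB, rfl, habne⟩, key⟩
    refine ⟨⟨C, hCmax⟩, ?_, ?_⟩
    · refine refines_of_subrefines (fun c hc => ?_)
      obtain ⟨a, haA, b, _, he, _⟩ := hc
      exact ⟨a, haA, he ▸ inf_le_left⟩
    · refine refines_of_subrefines (fun c hc => ?_)
      obtain ⟨a, _, b, hbB, he, _⟩ := hc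
      exact ⟨b, hbB, he ▸ inf_le_right⟩
end

section
/- If B is a c.c.c. Boolean algebra and a ∈ B⁺, then there is a generalized Galois-Tukey connection from the almost-refinement relational system of the relative algebra B↾a to the almost-refinement relational system of B. -/
/-- A maximal antichain of the relative algebra `B↾a`. -/
def MaxACIn {α : Type} [BooleanAlgebra α] (a : α) (A : Set α) : Prop :=
  A ⊆ Set.Iic a ∧ (∀ x ∈ A, x ≠ ⊥) ∧ (∀ x ∈ A, ∀ y ∈ A, x ≠ y → x ⊓ y = ⊥) ∧
    ∀ b : α, b ≤ a → b ≠ ⊥ → ∃ x ∈ A, x ⊓ b ≠ ⊥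

/-- The almost-refinement relational system `Part*(B↾a)` of the relative algebra. -/
def PartStarIn (α : Type) [BooleanAlgebra α] (a : α) : RelSys :=
  ⟨{A : Set α // MaxACIn a A}, {A : Set α // MaxACIn a A},
   fun A C => AlmostRefines A.1 C.1⟩


lemma extendMax {α : Type} [BooleanAlgebra α] {a : α} {A : Set α}
    (h : MaxACIn a A) : MaxAC (A ∪ ({aᶜ} \ {⊥})) := by
  obtain ⟨hsub, hne, hdisj, hmax⟩ := h
  have hdA : ∀ x ∈ A, x ⊓ aᶜ = ⊥ := fun x hx =>
    disjoint_iff.mp (disjoint_compl_right.mono_left (hsub hx))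
  refine ⟨⟨?_, ?_⟩, ?_⟩
  · rintro x (hx | ⟨rfl, hx⟩)
    · exact hne x hx
    · simpa using hx
  · rintro x (hx | ⟨rfl, hx⟩) y (hy | ⟨rfl, hy⟩) hxy
    · exact hdisj x hx y hy hxy
    · exact hdA x hx
    · rw [inf_comm]; exact hdA y hy
    · exact absurd rfl hxy
  · intro b hb
    by_cases hba : b ⊓ a = ⊥
    · have hbc : b ≤ aᶜ := by
        rwa [le_compl_iff_disjoint_right, disjoint_iff]
      have hac : aᶜ ≠ ⊥ := fun h => hb (le_bot_iff.mp (h ▸ hbc))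
      refine ⟨aᶜ, Or.inr ⟨rfl, by simpa using hac⟩, ?_⟩
      rwa [inf_eq_right.mpr hbc]
    · obtain ⟨x, hx, hxb⟩ := hmax (b ⊓ a) inf_le_right hba
      refine ⟨x, Or.inl hx, fun h => hxb ?_⟩
      rw [show x ⊓ (b ⊓ a) = x ⊓ b ⊓ a from (inf_assoc x b a).symm, h, bot_inf_eq]

lemma restrictMax {α : Type} [BooleanAlgebra α] {a : α} (ha : a ≠ ⊥) {C : Set α}
    (h : MaxAC C) : MaxACIn a {x | x ≠ ⊥ ∧ ∃ c ∈ C, x = c ⊓ a} := by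
  obtain ⟨⟨hne, hdisj⟩, hmax⟩ := h
  refine ⟨?_, ?_, ?_, ?_⟩
  · rintro x ⟨hx, c, hc, rfl⟩; exact inf_le_right
  · rintro x ⟨hx, _⟩; exact hx
  · rintro x ⟨hx, c, hc, rfl⟩ y ⟨hy, d, hd, rfl⟩ hxy
    have hcd : c ≠ d := fun h => hxy (by rw [h])
    have := hdisj c hc d hd hcd
    exact le_bot_iff.mp (le_trans (inf_le_inf inf_le_left inf_le_left) this.le)
  · intro b hba hb
    obtain ⟨c, hc, hcb⟩ := hmax b hb
    have hx : c ⊓ a ⊓ b = c ⊓ b := by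
      rw [inf_right_comm]; exact inf_eq_left.mpr (le_trans inf_le_right hba)
    refine ⟨c ⊓ a, ⟨fun h => hcb ?_, c, hc, rfl⟩, by rwa [hx]⟩
    rw [← hx, h, bot_inf_eq]


/-- If `B` is c.c.c. and `a ∈ B⁺`, then `Part*(B↾a) ≤_T Part*(B)`. -/
theorem stmt6 (α : Type) [BooleanAlgebra α] (hccc : CCC α) (a : α) (ha : a ≠ ⊥) :
    GT (PartStarIn α a) (PartStar α) := by
  classical
  refine ⟨fun A => ⟨A.1 ∪ ({aᶜ} \ {⊥}), extendMax A.2⟩,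
    fun C => ⟨{x | x ≠ ⊥ ∧ ∃ c ∈ C.1, x = c ⊓ a}, restrictMax ha C.2⟩, ?_⟩
  rintro A C ⟨F, hF, hRef⟩
  refine ⟨F.filter (fun x => x ∈ A.1), by intro x hx; simpa using (Finset.mem_filter.mp hx).2, ?_⟩
  rintro x ⟨hx0, c, hc, rfl⟩
  obtain ⟨d, hd, hcd⟩ := hRef c hc
  rcases hd with ⟨hdm, hdF⟩ | hd
  · rcases hdm with hdA | ⟨hd1, -⟩
    swap
    · rw [Set.mem_singleton_iff] at hd1; subst hd1
      exact absurd (le_bot_iff.mp (le_trans (inf_le_inf_right a hcd)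
        (le_of_eq compl_inf_eq_bot))) hx0
    · refine ⟨d, Or.inl ⟨hdA, fun h => hdF ?_⟩, le_trans inf_le_left hcd⟩
      simpa using (Finset.mem_filter.mp h).1
  · refine ⟨(F.filter (fun x => x ∈ A.1)).sup id, Or.inr (Set.mem_singleton _), ?_⟩
    simp only [Set.mem_singleton_iff] at hd
    subst hd
    calc c ⊓ a ≤ F.sup id ⊓ a := inf_le_inf_right a hcd
    _ = F.sup (fun x => id x ⊓ a) := Finset.sup_inf_distrib_right F id a
    _ ≤ (F.filter (fun x => x ∈ A.1)).sup id := by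
        apply Finset.sup_le
        intro x hxF
        rcases hF hxF with hxA | ⟨hx1, -⟩
        · exact le_trans inf_le_left
            (Finset.le_sup (f := id) (Finset.mem_filter.mpr ⟨hxF, by simpa using hxA⟩))
        · rw [Set.mem_singleton_iff] at hx1; subst hx1
          simp [compl_inf_eq_bot]
end

section
/- For a c.c.c. Boolean algebra B, the dominating number of the almost-refinement relational system Part*(B) is uncountable if and only if B is not atomic. -/
section Aux
variable {α : Type} [BooleanAlgebra α]

lemma almostRefines_self (A : Set α) : AlmostRefines A A := by
  refine ⟨∅, by simp, fun c hc => ⟨c, ?_, le_rfl⟩⟩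
  simp [hc]

lemma exists_maxAC_extension {A : Set α} (hA : BAAntichain A) :
    ∃ X : Set α, MaxAC X ∧ A ⊆ X := by
  have hchainub : ∀ c ⊆ {C : Set α | BAAntichain C}, IsChain (· ⊆ ·) c → c.Nonempty →
      ∃ ub ∈ {C : Set α | BAAntichain C}, ∀ s ∈ c, s ⊆ ub := by
    intro c hc hchain _
    refine ⟨⋃₀ c, ⟨?_, ?_⟩, fun s hs => Set.subset_sUnion_of_mem hs⟩
    · rintro a ⟨s, hs, has⟩
      exact (hc hs).1 a has
    · rintro a ⟨s, hs, has⟩ a' ⟨s', hs', has'⟩ hne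
      rcases hchain.total hs hs' with hss | hss
      · exact (hc hs').2 a (hss has) a' has' hne
      · exact (hc hs).2 a has a' (hss has') hne
  obtain ⟨X, hAX, hXS, hXmax⟩ := zorn_subset_nonempty {C : Set α | BAAntichain C} hchainub A hA
  refine ⟨X, ⟨hXS, ?_⟩, hAX⟩
  intro b hb
  by_contra h
  push_neg at h
  have hbX : b ∉ X := fun hbX => hb (by simpa [inf_idem] using h b hbX)
  have hins : insert b X ∈ {C : Set α | BAAntichain C} := by
    constructor
    · rintro a (rfl | ha)
      · exact hb
      · exact hXS.1 a ha
    · rintro a (rfl | ha) a' (rfl | ha') hne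
      · exact absurd rfl hne
      · rw [inf_comm]; exact h a' ha'
      · exact h a ha
      · exact hXS.2 a ha a' ha' hne
  have := hXmax hins (Set.subset_insert b X)
  exact hbX (this (Set.mem_insert b X))

end Aux

/-- For a c.c.c. Boolean algebra, `𝔡(Part*(B)) > ℵ₀` iff `B` is not atomic. -/
theorem stmt7 (α : Type) [BooleanAlgebra α] (hccc : CCC α) :
    Cardinal.aleph0 < dNum (PartStar α) ↔ ¬ IsAtomic α := by
  rw [← not_le, not_iff_not]
  constructor
  · -- dNum ≤ ℵ₀ → IsAtomic
    intro hle
    constructor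
    intro b
    by_cases hb : b = ⊥
    · exact Or.inl hb
    right
    by_contra hat
    push_neg at hat
    -- no atom below b; everything nonzero below b splits
    have split : ∀ c : α, c ≠ ⊥ → c ≤ b → ∃ u v : α,
        u ≠ ⊥ ∧ v ≠ ⊥ ∧ u ⊓ v = ⊥ ∧ u ≤ c ∧ v ≤ c := by
      intro c hc hcb
      have hnat : ¬ IsAtom c := fun h => (hat c h) hcb
      have : ∃ e, e < c ∧ e ≠ ⊥ := by
        by_contra h
        push_neg at h
        exact hnat ⟨hc, fun e he => h e he⟩
      obtain ⟨e, hec, he⟩ := this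
      refine ⟨e, c \ e, he, ?_, ?_, hec.le, sdiff_le⟩
      · intro h
        rw [sdiff_eq_bot_iff] at h
        exact absurd (le_antisymm h hec.le) (ne_of_gt hec)
      · exact inf_sdiff_self_right
    -- the dominating-number set is nonempty, so it has a member
    have hne : {c | ∃ Y : Set (PartStar α).Cod, Cardinal.mk Y = c ∧
        ∀ x : (PartStar α).Dom, ∃ y ∈ Y, (PartStar α).Rel x y}.Nonempty :=
      ⟨_, Set.univ, rfl, fun x => ⟨x, trivial, almostRefines_self x.1⟩⟩
    have hmem := csInf_mem hne
    obtain ⟨D, hDmk, hDdom⟩ := hmem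
    have hDcnt : D.Countable := by
      rw [← Cardinal.le_aleph0_iff_set_countable, hDmk]
      exact hle
    have htop : (⊤ : α) ≠ ⊥ := fun h => hb (le_bot_iff.mp (h ▸ le_top))
    have htopMax : MaxAC ({⊤} : Set α) := by
      refine ⟨⟨fun a ha => ?_, fun a ha a' ha' hne' => ?_⟩, fun x hx => ⟨⊤, rfl, by simpa⟩⟩
      · rw [Set.mem_singleton_iff] at ha; exact ha ▸ htop
      · rw [Set.mem_singleton_iff] at ha ha'; exact absurd (ha.trans ha'.symm) hne'
    have hDne : D.Nonempty := by
      obtain ⟨y, hy, -⟩ := hDdom ⟨{⊤}, htopMax⟩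
      exact ⟨y, hy⟩
    obtain ⟨e, he⟩ := hDcnt.exists_eq_range hDne
    -- build the pairwise disjoint sequence c below b
    have hsplit' : ∀ x : {x : α // x ≠ ⊥ ∧ x ≤ b}, ∃ p : α × α,
        p.1 ≠ ⊥ ∧ p.2 ≠ ⊥ ∧ p.1 ⊓ p.2 = ⊥ ∧ p.1 ≤ x.1 ∧ p.2 ≤ x.1 := by
      intro x
      obtain ⟨u, v, hu, hv, huv, huc, hvc⟩ := split x.1 x.2.1 x.2.2
      exact ⟨(u, v), hu, hv, huv, huc, hvc⟩
    choose g hg1 hg2 hg3 hg4 hg5 using hsplit'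
    set next : {x : α // x ≠ ⊥ ∧ x ≤ b} → {x : α // x ≠ ⊥ ∧ x ≤ b} :=
      fun x => ⟨(g x).2, hg2 x, (hg5 x).trans x.2.2⟩ with hnext
    set r : ℕ → {x : α // x ≠ ⊥ ∧ x ≤ b} := fun n => next^[n] ⟨b, hb, le_rfl⟩ with hr
    set c : ℕ → α := fun n => (g (r n)).1 with hcdef
    have hrsucc : ∀ k, r (k + 1) = next (r k) := fun k =>
      Function.iterate_succ_apply' next k _
    have hranti : Antitone (fun k => (r k).1) := by
      apply antitone_nat_of_succ_le
      intro k
      rw [hrsucc k]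
      exact hg5 (r k)
    have hcne : ∀ m, c m ≠ ⊥ := fun m => hg1 (r m)
    have hcleb : ∀ m, c m ≤ b := fun m => (hg4 (r m)).trans (r m).2.2
    have hcdisj : ∀ n m, n ≠ m → c n ⊓ c m = ⊥ := by
      have key : ∀ n m, n < m → c n ⊓ c m = ⊥ := by
        intro n m hnm
        have h1 : c m ≤ (r (n+1)).1 := (hg4 (r m)).trans (hranti hnm)
        have h2 : (r (n+1)).1 = (g (r n)).2 := by rw [hrsucc n]
        have : c n ⊓ c m ≤ (g (r n)).1 ⊓ (g (r n)).2 :=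
          inf_le_inf le_rfl (h1.trans_eq h2)
        rw [hg3 (r n)] at this
        exact le_bot_iff.mp this
      intro n m hnm
      rcases hnm.lt_or_gt with h | h
      · exact key n m h
      · rw [inf_comm]; exact key m n h
    -- pick y, u, v for each m
    have hkey : ∀ m : ℕ, ∃ y u v : α, y ∈ (e m.unpair.1).1 ∧ u ≠ ⊥ ∧ v ≠ ⊥ ∧
        u ⊓ v = ⊥ ∧ u ≤ y ⊓ c m ∧ v ≤ y ⊓ c m := by
      intro m
      obtain ⟨y, hy, hyc⟩ := (e m.unpair.1).2.2 (c m) (hcne m)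
      obtain ⟨u, v, hu, hv, huv, huc, hvc⟩ := split (y ⊓ c m) hyc
        (inf_le_right.trans (hcleb m))
      exact ⟨y, u, v, hy, hu, hv, huv, huc, hvc⟩
    choose y u v hy hu hv huv hu2 hv2 using hkey
    have hulec : ∀ m, u m ≤ c m := fun m => (hu2 m).trans inf_le_right
    have hvlec : ∀ m, v m ≤ c m := fun m => (hv2 m).trans inf_le_right
    have huley : ∀ m, u m ≤ y m := fun m => (hu2 m).trans inf_le_left
    have hvley : ∀ m, v m ≤ y m := fun m => (hv2 m).trans inf_le_left
    set X0 : Set α := {x | ∃ m, x = u m ∨ x = v m} with hX0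
    have hlec : ∀ x m, (x = u m ∨ x = v m) → x ≤ c m := by
      rintro x m (rfl | rfl)
      exacts [hulec m, hvlec m]
    have hX0anti : BAAntichain X0 := by
      constructor
      · rintro a ⟨m, (rfl | rfl)⟩
        exacts [hu m, hv m]
      · rintro a ⟨m, hm⟩ a' ⟨m', hm'⟩ hne'
        by_cases hmm : m = m'
        · subst hmm
          rcases hm with rfl | rfl <;> rcases hm' with rfl | rfl
          · exact absurd rfl hne'
          · exact huv m
          · rw [inf_comm]; exact huv m
          · exact absurd rfl hne'
        · have : a ⊓ a' ≤ c m ⊓ c m' := inf_le_inf (hlec a m hm) (hlec a' m' hm')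
          rw [hcdisj m m' hmm] at this
          exact le_bot_iff.mp this
    obtain ⟨X, hXmax, hX0X⟩ := exists_maxAC_extension hX0anti
    have humem : ∀ m, u m ∈ X := fun m => hX0X ⟨m, Or.inl rfl⟩
    have hvmem : ∀ m, v m ∈ X := fun m => hX0X ⟨m, Or.inr rfl⟩
    -- X is almost refined by some member of D; derive contradiction
    obtain ⟨Y, hYD, hrel⟩ := hDdom ⟨X, hXmax⟩
    rw [he] at hYD
    obtain ⟨n, rfl⟩ := hYD
    obtain ⟨F, hFX, href⟩ := hrel
    -- find k with u, v outside F
    have hKuinj : Function.Injective (fun k => u (Nat.pair n k)) := by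
      intro k k' hkk
      by_contra hne'
      have hmm : Nat.pair n k ≠ Nat.pair n k' := fun h => hne' (by
        have := congrArg Nat.unpair h
        simpa [Nat.unpair_pair] using this)
      have : u (Nat.pair n k) ⊓ u (Nat.pair n k') ≤ c (Nat.pair n k) ⊓ c (Nat.pair n k') :=
        inf_le_inf (hulec _) (hulec _)
      rw [hcdisj _ _ hmm] at this
      simp only at hkk
      rw [hkk, inf_idem] at this
      exact hu _ (le_bot_iff.mp this)
    have hKvinj : Function.Injective (fun k => v (Nat.pair n k)) := by
      intro k k' hkk
      by_contra hne'
      have hmm : Nat.pair n k ≠ Nat.pair n k' := fun h => hne' (by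
        have := congrArg Nat.unpair h
        simpa [Nat.unpair_pair] using this)
      have : v (Nat.pair n k) ⊓ v (Nat.pair n k') ≤ c (Nat.pair n k) ⊓ c (Nat.pair n k') :=
        inf_le_inf (hvlec _) (hvlec _)
      rw [hcdisj _ _ hmm] at this
      simp only at hkk
      rw [hkk, inf_idem] at this
      exact hv _ (le_bot_iff.mp this)
    have hbad : {k : ℕ | u (Nat.pair n k) ∈ (F : Set α) ∨ v (Nat.pair n k) ∈ (F : Set α)}.Finite := by
      have h1 : ((fun k => u (Nat.pair n k)) ⁻¹' (F : Set α)).Finite :=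
        Set.Finite.preimage (hKuinj.injOn) F.finite_toSet
      have h2 : ((fun k => v (Nat.pair n k)) ⁻¹' (F : Set α)).Finite :=
        Set.Finite.preimage (hKvinj.injOn) F.finite_toSet
      exact (h1.union h2).subset (fun k hk => hk)
    obtain ⟨k, hk⟩ := hbad.infinite_compl.nonempty
    simp only [Set.mem_compl_iff, Set.mem_setOf_eq, not_or] at hk
    set m := Nat.pair n k with hm
    have hymem : y m ∈ (e n).1 := by
      have := hy m
      rwa [hm, Nat.unpair_pair] at this
    obtain ⟨a, ha, hya⟩ := href (y m) hymem
    rcases ha with ⟨haX, haF⟩ | ha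
    · -- a ∈ X \ F
      have hua : a = u m := by
        by_contra hne'
        have : u m ⊓ a = ⊥ := hXmax.1.2 (u m) (humem m) a haX (fun h => hne' h.symm)
        have h2 : u m ≤ a := (huley m).trans hya
        rw [inf_eq_left.mpr h2] at this
        exact hu m this
      have hva : a = v m := by
        by_contra hne'
        have : v m ⊓ a = ⊥ := hXmax.1.2 (v m) (hvmem m) a haX (fun h => hne' h.symm)
        have h2 : v m ≤ a := (hvley m).trans hya
        rw [inf_eq_left.mpr h2] at this
        exact hv m this
      have : u m = v m := hua ▸ hva
      have h3 : u m ⊓ v m = u m := by rw [← this, inf_idem]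
      rw [huv m] at h3
      exact hu m h3.symm
    · -- a = sup F
      rw [Set.mem_singleton_iff] at ha
      subst ha
      have h2 : u m ≤ F.sup id := (huley m).trans hya
      have h3 : u m = u m ⊓ F.sup id := (inf_eq_left.mpr h2).symm
      rw [Finset.sup_inf_distrib_left] at h3
      have h4 : F.sup (fun i => u m ⊓ id i) = ⊥ := by
        rw [Finset.sup_eq_bot_iff]
        intro f hf
        have hfX : f ∈ X := hFX hf
        have hne' : u m ≠ f := fun h => hk.1 (h ▸ hf)
        exact hXmax.1.2 (u m) (humem m) f hfX hne'
      rw [h4] at h3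
      exact hu m h3
  · -- IsAtomic → dNum ≤ ℵ₀
    intro h
    have hAt : MaxAC {a : α | IsAtom a} := by
      refine ⟨⟨fun a ha => ha.1, fun a ha a' ha' hne' => ?_⟩, fun x hx => ?_⟩
      · rcases lt_or_eq_of_le (inf_le_left : a ⊓ a' ≤ a) with hlt | heq
        · exact ha.2 _ hlt
        · exfalso
          have hle : a ≤ a' := heq ▸ inf_le_right
          rcases (ha'.le_iff.mp hle) with h1 | h1
          · exact ha.1 h1
          · exact hne' h1
      · rcases h.eq_bot_or_exists_atom_le x with rfl | ⟨a, ha, hax⟩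
        · exact absurd rfl hx
        · refine ⟨a, ha, ?_⟩
          rw [inf_eq_left.mpr hax]
          exact ha.1
    have hdom : ∀ x : (PartStar α).Dom, ∃ y ∈ ({⟨{a : α | IsAtom a}, hAt⟩} : Set (PartStar α).Cod),
        (PartStar α).Rel x y := by
      intro x
      refine ⟨_, rfl, ∅, by simp, ?_⟩
      intro a ha
      obtain ⟨z, hz, hza⟩ := x.2.2 a ha.1
      refine ⟨z, ?_, ?_⟩
      · left; simpa using hz
      · rcases ha.le_iff.mp (inf_le_right : z ⊓ a ≤ a) with h1 | h1
        · exact absurd h1 hza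
        · rw [← h1]; exact inf_le_left
    calc dNum (PartStar α) ≤ 1 := csInf_le (OrderBot.bddBelow _)
          ⟨_, Cardinal.mk_singleton _, hdom⟩
      _ ≤ Cardinal.aleph0 := Cardinal.one_lt_aleph0.le
end

section
/- The relational system (nwd(Q), ⊥*, seq(Q)) of nowhere dense sets of rationals versus divergent sequences is Galois-Tukey equivalent to the system D(Q) = (nwd(Q), ⊥*, Dense(Q)) of nowhere dense sets versus dense sets, where ⊥* means finite intersection (respectively, only finitely many terms of the sequence lie in the nowhere dense set). -/
/-- The dense linear order on the binary tree `2^{<ω}` (the rationals):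
`s < t` iff `t ⊂ s` and `s(|t|) = 0`, or `s ⊂ t` and `t(|s|) = 1`, or `s, t` are
incomparable and `s(k) < t(k)` at their first point of difference `k`. -/
def ltQ (s t : List Bool) : Prop :=
  (t <+: s ∧ s[t.length]? = some false) ∨
  (s <+: t ∧ t[s.length]? = some true) ∨
  (¬ s <+: t ∧ ¬ t <+: s ∧
    ∃ k : ℕ, (∀ i < k, s[i]? = t[i]?) ∧ s[k]? = some false ∧ t[k]? = some true)

/-- A dense set of rationals: every node has an extension in `D`. -/
def DenseQ (D : Set (List Bool)) : Prop := ∀ s : List Bool, ∃ t ∈ D, s <+: t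

/-- A maximal antichain in the tree `2^{<ω}`. -/
def TreeMaxAC (A : Set (List Bool)) : Prop :=
  (∀ a ∈ A, ∀ b ∈ A, a ≠ b → ¬ a <+: b ∧ ¬ b <+: a) ∧
    ∀ s : List Bool, ∃ a ∈ A, a <+: s ∨ s <+: a

/-- A nowhere dense set of rationals: all its elements extend into a single
maximal antichain. -/
def NwdQ (N : Set (List Bool)) : Prop :=
  ∃ A : Set (List Bool), TreeMaxAC A ∧ ∀ s ∈ N, ∃ t ∈ A, s <+: t

/-- A divergent sequence of rationals: eventually `<`-below every node. -/
def divergentQ (x : ℕ → List Bool) : Prop :=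
  ∀ s : List Bool, ∀ᶠ i in Filter.atTop, ltQ (x i) s

/-- The system `D(Q) = (nwd(Q), ⊥*, Dense(Q))`. -/
def DsysDense : RelSys :=
  ⟨{N : Set (List Bool) // NwdQ N}, {D : Set (List Bool) // DenseQ D},
   fun N D => (N.1 ∩ D.1).Finite⟩

/-- The system `(nwd(Q), ⊥*, seq(Q))` of nowhere dense sets versus divergent sequences. -/
def DsysSeq : RelSys :=
  ⟨{N : Set (List Bool) // NwdQ N}, {x : ℕ → List Bool // divergentQ x},
   fun N x => {i | x.1 i ∈ N.1}.Finite⟩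

/-!
Nowhere density is used in its topological form: `N` is nowhere dense iff every node has an
extension none of whose extensions lies in `N`.

A dense `D` yields a sequence `y n ∈ D` extending `0ⁿ`; it diverges, and it takes each value only
finitely often, so `N ∩ D` finite gives `{n | y n ∈ N}` finite. Conversely, a divergent `x`
yields the dense set of all `w ++ x i` with `0^|w| ⊑ x i`, and `N` goes to the set of tails `v`
with `w ++ v ∈ N` for some `w` with `0^|w| ⊑ v`. Below a node `s ++ [true]` only the finitely many
`w` with `|w| ≤ |s|` matter, which is why the set of tails is again nowhere dense.
-/

open List Filter

section Tree

variable {N : Set (List Bool)}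

def Avoids (N : Set (List Bool)) (t : List Bool) : Prop := ∀ n ∈ N, ¬ t <+: n

lemma Avoids.of_prefix {t u : List Bool} (ht : Avoids N t) (htu : t <+: u) : Avoids N u :=
  fun n hn hun => ht n hn (htu.trans hun)

lemma exists_minimal_prefix {α : Type*} {E : Set (List α)} {e : List α} (he : e ∈ E) :
    ∃ m ∈ E, m <+: e ∧ ∀ p ∈ E, p <+: m → p = m := by
  obtain ⟨m, ⟨hmE, hme⟩, hmin⟩ :=
    (measure List.length).wf.has_min {p | p ∈ E ∧ p <+: e} ⟨e, he, prefix_refl e⟩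
  refine ⟨m, hmE, hme, fun p hpE hpm => hpm.eq_of_length (le_antisymm hpm.length_le ?_)⟩
  exact not_lt.mp (hmin p ⟨hpE, hpm.trans hme⟩)

theorem nwdQ_iff : NwdQ N ↔ ∀ s, ∃ t, s <+: t ∧ Avoids N t := by
  constructor
  · rintro ⟨A, ⟨hAC, hmax⟩, hcov⟩ s
    obtain ⟨a, haA, has⟩ := hmax s
    obtain ⟨c, hac, hsc⟩ : ∃ c, a <+: c ∧ s <+: c :=
      has.elim (fun h => ⟨s, h, prefix_refl s⟩) (fun h => ⟨a, prefix_refl a, h⟩)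
    refine ⟨c ++ [false], hsc.trans (prefix_append c _), fun n hn hcn => ?_⟩
    obtain ⟨a', ha'A, hna'⟩ := hcov n hn
    have hca' : c ++ [false] <+: a' := hcn.trans hna'
    obtain rfl : a = a' := by
      by_contra hne
      exact (hAC a haA a' ha'A hne).1 (hac.trans ((prefix_append c _).trans hca'))
    have := hca'.length_le
    have := hac.length_le
    simp only [length_append, length_singleton] at *
    omega
  · intro h
    refine ⟨{m | Avoids N m ∧ ∀ p, Avoids N p → p <+: m → p = m}, ⟨?_, fun s => ?_⟩, fun n hn => ?_⟩
    · rintro a ⟨haE, hamin⟩ b ⟨hbE, hbmin⟩ hne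
      exact ⟨fun hab => hne (hbmin a haE hab), fun hba => hne (hamin b hbE hba).symm⟩
    · obtain ⟨e, hse, he⟩ := h s
      obtain ⟨m, hmE, hme, hmin⟩ := exists_minimal_prefix (E := {t | Avoids N t}) he
      exact ⟨m, ⟨hmE, hmin⟩, prefix_or_prefix_of_prefix hme hse⟩
    · obtain ⟨e, hne, he⟩ := h n
      obtain ⟨m, hmE, hme, hmin⟩ := exists_minimal_prefix (E := {t | Avoids N t}) he
      exact ⟨m, ⟨hmE, hmin⟩, (prefix_or_prefix_of_prefix hne hme).resolve_right (hmE n hn)⟩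

lemma NwdQ.exists_avoids_append (hN : NwdQ N) {W : Set (List Bool)} (hW : W.Finite)
    (s : List Bool) : ∃ t, s <+: t ∧ ∀ w ∈ W, Avoids N (w ++ t) := by
  induction W, hW using Set.Finite.induction_on with
  | empty => exact ⟨s, prefix_refl s, by simp⟩
  | @insert w W _ _ ih =>
    obtain ⟨t, hst, ht⟩ := ih
    obtain ⟨u, hwtu, hu⟩ := nwdQ_iff.mp hN (w ++ t)
    obtain ⟨r, rfl⟩ := hwtu
    refine ⟨t ++ r, hst.trans (prefix_append t r), ?_⟩
    rintro w' (rfl | hw')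
    · simpa only [append_assoc] using hu
    · exact (ht w' hw').of_prefix (by simp [← append_assoc])

def tailSet (N : Set (List Bool)) : Set (List Bool) :=
  {v | ∃ w, replicate w.length false <+: v ∧ w ++ v ∈ N}

lemma length_le_of_replicate_prefix {s v : List Bool} {m : ℕ} (hm : replicate m false <+: v)
    (hs : s ++ [true] <+: v) : m ≤ s.length := by
  by_contra! hlt
  have := (prefix_replicate_iff.mp (prefix_of_prefix_length_le hs hm (by simpa using hlt))).2
  simp [append_eq_replicate_iff] at this

lemma NwdQ.tailSet (hN : NwdQ N) : NwdQ (tailSet N) := by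
  refine nwdQ_iff.mpr fun s => ?_
  obtain ⟨t, hst, ht⟩ := hN.exists_avoids_append (finite_length_le Bool s.length) (s ++ [true])
  refine ⟨t, (prefix_append s _).trans hst, ?_⟩
  rintro v ⟨w, hwv, hwvN⟩ htv
  exact ht w (length_le_of_replicate_prefix hwv (hst.trans htv)) _ hwvN
    ((prefix_append_right_inj w).mpr htv)

end Tree

section Sequences

lemma eq_replicate_or_exists_true (s : List Bool) :
    s = replicate s.length false ∨ ∃ k r, s = replicate k false ++ true :: r := by
  induction s with
  | nil => exact Or.inl rfl
  | cons b s ih =>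
    cases b
    · rcases ih with h | ⟨k, r, h⟩
      · exact Or.inl (by rw [length_cons, replicate_succ, ← h])
      · exact Or.inr ⟨k + 1, r, by rw [replicate_succ, h]; rfl⟩
    · exact Or.inr ⟨0, s, rfl⟩

lemma ltQ_of_replicate_prefix {s t : List Bool} (h : replicate (s.length + 1) false <+: t) :
    ltQ t s := by
  have ht : ∀ i ≤ s.length, t[i]? = some false := fun i hi => by
    rw [prefix_iff_getElem?.mp h i (by simpa [Nat.lt_succ_iff] using hi), getElem_replicate]
  rcases eq_replicate_or_exists_true s with hs | ⟨k, r, rfl⟩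
  · refine Or.inl ⟨?_, ht _ le_rfl⟩
    rw [hs]
    exact (prefix_replicate_iff.mpr ⟨by simp, by simp⟩).trans h
  · have hk : k < (replicate k false ++ true :: r).length := by simp
    refine Or.inr (Or.inr ⟨fun hts => ?_, fun hst => ?_, k, fun i hi => ?_, ht k hk.le, by simp⟩)
    · have := hts.length_le
      have := h.length_le
      simp only [length_replicate] at *
      omega
    · have := prefix_iff_getElem?.mp hst k hk
      simp [ht k hk.le] at this
    · rw [ht i (by omega)]
      simp [getElem?_append_left, hi]

lemma replicate_prefix_of_ltQ {v : List Bool} {n : ℕ} (h : ltQ v (replicate n false)) :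
    replicate n false <+: v := by
  rcases h with ⟨hp, -⟩ | ⟨-, hv⟩ | ⟨-, -, k, -, -, hk⟩
  · exact hp
  all_goals simp [getElem?_replicate] at *

lemma divergentQ_of_replicate_prefix {y : ℕ → List Bool} (hy : ∀ n, replicate n false <+: y n) :
    divergentQ y := fun s =>
  eventually_atTop.mpr ⟨s.length + 1, fun n hn =>
    ltQ_of_replicate_prefix ((prefix_replicate_iff.mpr ⟨by simpa using hn, by simp⟩).trans (hy n))⟩

lemma finite_preimage_of_replicate_prefix {y : ℕ → List Bool}
    (hy : ∀ n, replicate n false <+: y n) {S : Set (List Bool)} (hS : S.Finite) :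
    (y ⁻¹' S).Finite :=
  hS.preimage' fun t _ => (Set.finite_Iic t.length).subset fun n (hn : y n = t) => by
    simpa [hn] using (hy n).length_le

def prefixedTerms (x : ℕ → List Bool) : Set (List Bool) :=
  {u | ∃ i w, replicate w.length false <+: x i ∧ u = w ++ x i}

lemma divergentQ.denseQ_prefixedTerms {x : ℕ → List Bool} (hx : divergentQ x) :
    DenseQ (prefixedTerms x) := fun s => by
  obtain ⟨i, hi⟩ := ((hx (replicate s.length false)).mono fun _ => replicate_prefix_of_ltQ).exists
  exact ⟨s ++ x i, ⟨i, s, hi, rfl⟩, prefix_append s _⟩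

lemma finite_inter_prefixedTerms {N : Set (List Bool)} {x : ℕ → List Bool}
    (hx : {i | x i ∈ tailSet N}.Finite) : (N ∩ prefixedTerms x).Finite := by
  refine (hx.biUnion fun i _ => (finite_length_le Bool (x i).length).image (· ++ x i)).subset ?_
  rintro _ ⟨hu, i, w, hw, rfl⟩
  exact Set.mem_biUnion ⟨w, hw, hu⟩ ⟨w, by simpa using hw.length_le, rfl⟩

end Sequences

/-- `(nwd(Q), ⊥*, seq(Q)) ≡_T (nwd(Q), ⊥*, Dense(Q))`. -/
theorem stmt17 : GTequiv DsysSeq DsysDense := by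
  constructor
  · choose y hyD hy using
      fun (D : {D : Set (List Bool) // DenseQ D}) (n : ℕ) => D.2 (replicate n false)
    refine ⟨id, fun D => ⟨y D, divergentQ_of_replicate_prefix (hy D)⟩, fun N D hND => ?_⟩
    exact (finite_preimage_of_replicate_prefix (hy D) hND).subset fun i hi => ⟨hi, hyD D i⟩
  · exact ⟨fun N => ⟨tailSet N.1, N.2.tailSet⟩,
      fun x => ⟨prefixedTerms x.1, x.2.denseQ_prefixedTerms⟩,
      fun _ _ => finite_inter_prefixedTerms⟩
end

section
/- For every Boolean algebra B, 𝔲 ≤ 𝔲(ωB/Fin); moreover, if B is complete, atomless, and c.c.c., then 𝔲(ωB/Fin) = 𝔲(B). -/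
/-- Quotients of Boolean rings are Boolean rings. -/
instance quotBooleanRing (R : Type) [BooleanRing R] (I : Ideal R) :
    BooleanRing (R ⧸ I) :=
  { (inferInstance : CommRing (R ⧸ I)) with
    isIdempotentElem := fun a => by
      obtain ⟨x, rfl⟩ := Ideal.Quotient.mk_surjective a
      unfold IsIdempotentElem
      rw [← map_mul, BooleanRing.mul_self] }

/-- The quotient of a Boolean algebra by an ideal (presented as a ring ideal of the
associated Boolean ring), again viewed as a Boolean algebra. -/
def quotAlg (α : Type) [BooleanAlgebra α] (I : Ideal (AsBoolRing α)) : Type :=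
  AsBoolAlg (AsBoolRing α ⧸ I)

noncomputable instance quotAlgBA (α : Type) [BooleanAlgebra α] (I : Ideal (AsBoolRing α)) :
    BooleanAlgebra (quotAlg α I) :=
  inferInstanceAs (BooleanAlgebra (AsBoolAlg (AsBoolRing α ⧸ I)))

/-- The quotient map from a Boolean algebra to its quotient algebra. -/
def quotCls {α : Type} [BooleanAlgebra α] (I : Ideal (AsBoolRing α)) (a : α) : quotAlg α I :=
  toBoolAlg (Ideal.Quotient.mk I (toBoolRing a))

/-- The ideal of finite subsets of `ω`, as a ring ideal of `P(ω)`. -/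
def finIdeal : Ideal (AsBoolRing (Set ℕ)) where
  carrier := {x | (ofBoolRing x : Set ℕ).Finite}
  zero_mem' := by simp [ofBoolRing_zero, Set.bot_eq_empty]
  add_mem' := by
    intro a b ha hb
    simpa [ofBoolRing_add] using ((ha.union hb).subset (Set.symmDiff_subset_union))
  smul_mem' := by
    intro c x hx
    simpa [smul_eq_mul, ofBoolRing_mul] using hx.subset (by simp [Set.inf_eq_inter])

/-- `P(ω)/fin`. -/
def PomegaFin : Type := quotAlg (Set ℕ) finIdeal

noncomputable instance : BooleanAlgebra PomegaFin := quotAlgBA _ _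

/-- The ideal `Fin` of the product algebra `ωB`: functions with finite support. -/
def finSuppIdeal (B : Type) [BooleanAlgebra B] : Ideal (AsBoolRing (ℕ → B)) where
  carrier := {x | {n | (ofBoolRing x : ℕ → B) n ≠ ⊥}.Finite}
  zero_mem' := by simp [ofBoolRing_zero]
  add_mem' := by
    intro a b ha hb
    refine ((ha.union hb).subset ?_)
    intro n hn
    simp only [ofBoolRing_add, Pi.symmDiff_apply, Set.mem_setOf_eq] at hn
    by_contra h
    simp only [Set.mem_union, Set.mem_setOf_eq] at h
    push_neg at h
    simp [h.1, h.2] at hn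
  smul_mem' := by
    intro c x hx
    refine hx.subset ?_
    intro n hn
    simp only [smul_eq_mul, ofBoolRing_mul, Pi.inf_apply, Set.mem_setOf_eq] at hn
    simp only [Set.mem_setOf_eq]
    intro h
    simp [h] at hn

/-- The reduced power `ωB/Fin` of a Boolean algebra `B`. -/
def redPow (B : Type) [BooleanAlgebra B] : Type := quotAlg (ℕ → B) (finSuppIdeal B)

noncomputable instance (B : Type) [BooleanAlgebra B] : BooleanAlgebra (redPow B) := quotAlgBA _ _
/-- The reaping relational system of a Boolean algebra. -/
def reapSys (α : Type) [BooleanAlgebra α] : RelSys :=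
  ⟨α, {r : α // r ≠ ⊥}, fun b r => r.1 ≤ b ∨ r.1 ⊓ b = ⊥⟩

/-- An ultrafilter on a Boolean algebra. -/
def IsBAUltrafilter {α : Type} [BooleanAlgebra α] (U : Set α) : Prop :=
  ⊥ ∉ U ∧ (∀ a ∈ U, ∀ b ∈ U, a ⊓ b ∈ U) ∧ (∀ a ∈ U, ∀ b, a ≤ b → b ∈ U) ∧
    ∀ a : α, a ∈ U ∨ aᶜ ∈ U

/-- A principal ultrafilter: one generated by a single element. -/
def IsPrincipal {α : Type} [BooleanAlgebra α] (U : Set α) : Prop :=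
  ∃ a : α, U = {b | a ≤ b}

/-- The ultrafilter number of a Boolean algebra: the least cofinality of `(U, ≥)`
over non-principal ultrafilters `U`. -/
noncomputable def uNum (α : Type) [BooleanAlgebra α] : Cardinal :=
  sInf { c | ∃ U : Set α, IsBAUltrafilter U ∧ ¬ IsPrincipal U ∧
    ∃ D : Set α, D ⊆ U ∧ (∀ u ∈ U, ∃ d ∈ D, d ≤ u) ∧ Cardinal.mk D = c }

/-!
Each inequality transports a non-principal ultrafilter, together with a base, from one algebra
to the other; non-principality is automatic because `P(ω)/fin`, `ωB/Fin` and (in the second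
part) `B` are atomless.

* `𝔲 ≤ 𝔲(ωB/Fin)`: pull an ultrafilter `V` on `ωB/Fin` back along `[A] ↦ [χ_A]`; the supports
  of representatives of a base of `V` form a base of the pullback.
* `𝔲(B) ≤ 𝔲(ωB/Fin)`: pull `V` back along the diagonal `B → ωB/Fin`; the tail suprema
  `⋁_{n ≥ m} x n` of representatives `x` of a base `D` form a base of size `|D| · ℵ₀ = |D|`.
* `𝔲(ωB/Fin) ≤ 𝔲(B)`: c.c.c. and atomlessness give a partition of unity `(a n)` avoiding a
  given ultrafilter `U` on `B`. Gluing `x ↦ ⋁ₙ a n ⊓ x n` is a homomorphism `ωB → B`, and the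
  pullback of `U` along it contains no finitely supported element, so it descends to `ωB/Fin`;
  a base `D` of `U` yields the base `{[(a n ⊓ d)ₙ] : d ∈ D}`.
-/

open Set Cardinal Function

section QuotAlg

variable {α : Type} [BooleanAlgebra α] (I : Ideal (AsBoolRing α))

noncomputable def quotHom : BoundedLatticeHom α (quotAlg α I) :=
  (Ideal.Quotient.mk I).asBoolAlg.comp
    ((OrderIso.asBoolAlgAsBoolRing α).symm : BoundedLatticeHom α (AsBoolAlg (AsBoolRing α)))

theorem quotHom_surjective : Surjective (quotHom I) := fun v => by
  obtain ⟨x, hx⟩ := Ideal.Quotient.mk_surjective (ofBoolAlg v)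
  exact ⟨ofBoolRing x, by rw [← toBoolAlg_ofBoolAlg v, ← hx]; rfl⟩

theorem quotHom_eq_bot_iff {a : α} : quotHom I a = ⊥ ↔ toBoolRing a ∈ I :=
  Ideal.Quotient.eq_zero_iff_mem

theorem quotHom_le_quotHom_iff {a b : α} :
    quotHom I a ≤ quotHom I b ↔ toBoolRing (a \ b) ∈ I := by
  rw [← quotHom_eq_bot_iff, map_sdiff', sdiff_eq_bot_iff]

end QuotAlg

theorem not_isAtom_of_inf_ne_bot {α : Type} [BooleanAlgebra α] {a b : α} (h : a ⊓ b ≠ ⊥)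
    (h' : a ⊓ bᶜ ≠ ⊥) : ¬ IsAtom a := by
  intro ha
  rcases ha.le_iff.1 (inf_le_left : a ⊓ b ≤ a) with hb | hb
  · exact h hb
  · exact h' (by rw [← hb, inf_assoc, inf_compl_eq_bot, inf_bot_eq])

namespace IsBAUltrafilter

variable {α β : Type} [BooleanAlgebra α] [BooleanAlgebra β] {U : Set α} {V : Set β} {a b : α}

theorem ne_bot_of_mem (hU : IsBAUltrafilter U) (ha : a ∈ U) : a ≠ ⊥ :=
  fun h => hU.1 (h ▸ ha)

theorem mem_of_le (hU : IsBAUltrafilter U) (ha : a ∈ U) (hab : a ≤ b) : b ∈ U :=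
  hU.2.2.1 a ha b hab

theorem inf_mem (hU : IsBAUltrafilter U) (ha : a ∈ U) (hb : b ∈ U) : a ⊓ b ∈ U :=
  hU.2.1 a ha b hb

theorem compl_mem_iff (hU : IsBAUltrafilter U) : aᶜ ∈ U ↔ a ∉ U :=
  ⟨fun hc ha => hU.1 (inf_compl_eq_bot (a := a) ▸ hU.inf_mem ha hc),
    (hU.2.2.2 a).resolve_left⟩

theorem top_mem (hU : IsBAUltrafilter U) : ⊤ ∈ U :=
  compl_bot (α := α) ▸ hU.compl_mem_iff.2 hU.1

theorem mem_or_mem_of_sup_mem (hU : IsBAUltrafilter U) (h : a ⊔ b ∈ U) : a ∈ U ∨ b ∈ U := by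
  by_contra! hab
  have hc : (a ⊔ b)ᶜ ∈ U := by
    rw [compl_sup]
    exact hU.inf_mem (hU.compl_mem_iff.2 hab.1) (hU.compl_mem_iff.2 hab.2)
  exact hU.compl_mem_iff.1 hc h

theorem finset_sup_notMem (hU : IsBAUltrafilter U) {ι : Type} {s : Finset ι} {f : ι → α}
    (h : ∀ i ∈ s, f i ∉ U) : s.sup f ∉ U :=
  Finset.sup_induction (p := (· ∉ U)) hU.1
    (fun _ ha _ hb hab => (hU.mem_or_mem_of_sup_mem hab).elim ha hb) h

theorem exists_le_notMem (hU : IsBAUltrafilter U) (hatom : ∀ a : α, ¬ IsAtom a) (hb : b ≠ ⊥) :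
    ∃ c ≤ b, c ≠ ⊥ ∧ c ∉ U := by
  obtain ⟨c, hcb, hc⟩ : ∃ c < b, c ≠ ⊥ := by simpa [IsAtom, hb] using hatom b
  by_cases hcU : c ∈ U
  · refine ⟨b \ c, sdiff_le, fun h => hcb.not_ge (sdiff_eq_bot_iff.1 h), fun h => ?_⟩
    exact hU.1 (inf_sdiff_self_right (x := c) (y := b) ▸ hU.inf_mem hcU h)
  · exact ⟨c, hcb.le, hc, hcU⟩

theorem not_isPrincipal (hU : IsBAUltrafilter U) (hatom : ∀ a : α, ¬ IsAtom a) :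
    ¬ IsPrincipal U := by
  rintro ⟨a, rfl⟩
  obtain ⟨c, hca, hc, hcU⟩ := hU.exists_le_notMem hatom (hU.ne_bot_of_mem le_rfl)
  have hac : a ≤ cᶜ := hU.compl_mem_iff.2 hcU
  exact hc (le_bot_iff.1 (inf_compl_eq_bot (a := c) ▸ le_inf le_rfl (hca.trans hac)))

theorem comap (hV : IsBAUltrafilter V) (f : BoundedLatticeHom α β) :
    IsBAUltrafilter (f ⁻¹' V) :=
  ⟨by simpa using hV.1, fun a ha b hb => by simpa using hV.inf_mem ha hb,
    fun a ha b hab => hV.mem_of_le ha (OrderHomClass.mono f hab),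
    fun a => by simpa [map_compl'] using hV.2.2.2 (f a)⟩

theorem mem_of_map_le (hU : IsBAUltrafilter U) {f : BoundedLatticeHom α β}
    (hker : ∀ a ∈ U, f a ≠ ⊥) (ha : a ∈ U) (hab : f a ≤ f b) : b ∈ U := by
  by_contra hb
  refine hker _ (hU.inf_mem ha (hU.compl_mem_iff.2 hb)) ?_
  rwa [map_inf, map_compl', ← _root_.sdiff_eq, sdiff_eq_bot_iff]

theorem image (hU : IsBAUltrafilter U) {f : BoundedLatticeHom α β} (hker : ∀ a ∈ U, f a ≠ ⊥)
    (hf : Surjective f) : IsBAUltrafilter (f '' U) := by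
  refine ⟨fun ⟨a, ha, hab⟩ => hker a ha hab, ?_, ?_, fun v => ?_⟩
  · rintro _ ⟨a, ha, rfl⟩ _ ⟨b, hb, rfl⟩
    exact ⟨a ⊓ b, hU.inf_mem ha hb, map_inf f a b⟩
  · rintro _ ⟨a, ha, rfl⟩ v hav
    obtain ⟨b, rfl⟩ := hf v
    exact ⟨b, hU.mem_of_map_le hker ha hav, rfl⟩
  · obtain ⟨a, rfl⟩ := hf v
    rw [← map_compl']
    exact (hU.2.2.2 a).imp (⟨a, ·, rfl⟩) (⟨aᶜ, ·, rfl⟩)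

end IsBAUltrafilter

theorem exists_isBAUltrafilter (α : Type) [BooleanAlgebra α] [Nontrivial α] :
    ∃ U : Set α, IsBAUltrafilter U := by
  obtain ⟨I, hI⟩ := Order.Ideal.exists_maximal (P := α)
  refine ⟨(I : Set α)ᶜ, fun h => h I.bot_mem, fun a ha b hb hab => ?_,
    fun a ha b hab hb => ha (I.lower hab hb), fun a => ?_⟩
  · exact (Order.Ideal.IsPrime.mem_or_mem inferInstance hab).elim ha hb
  · by_contra! h
    exact hI.top_notMem (sup_compl_eq_top (x := a) ▸ I.sup_mem (not_not.1 h.1) (not_not.1 h.2))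

def IsFilterBase {α : Type} [BooleanAlgebra α] (U D : Set α) : Prop :=
  D ⊆ U ∧ ∀ u ∈ U, ∃ d ∈ D, d ≤ u

theorem IsBAUltrafilter.isPrincipal_of_finite_base {α : Type} [BooleanAlgebra α] {U D : Set α}
    (hU : IsBAUltrafilter U) (hD : IsFilterBase U D) (hfin : D.Finite) : IsPrincipal U := by
  obtain ⟨d, hd, -⟩ := hD.2 ⊤ hU.top_mem
  obtain ⟨d₀, hd₀⟩ := hfin.exists_minimal ⟨d, hd⟩
  refine ⟨d₀, Set.ext fun u => ⟨fun hu => ?_, hU.mem_of_le (hD.1 hd₀.1)⟩⟩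
  obtain ⟨d, hd, hdu⟩ := hD.2 _ (hU.inf_mem (hD.1 hd₀.1) hu)
  exact (hd₀.2 hd (hdu.trans inf_le_left)).trans (hdu.trans inf_le_right)

theorem uNum_le_uNum {α β : Type} [BooleanAlgebra α] [BooleanAlgebra β] [Nontrivial β]
    (hα : ∀ a : α, ¬ IsAtom a) (hβ : ∀ b : β, ¬ IsAtom b)
    (h : ∀ V D : Set β, IsBAUltrafilter V → ¬ IsPrincipal V → IsFilterBase V D →
      ∃ U D' : Set α, IsBAUltrafilter U ∧ IsFilterBase U D' ∧ #D' ≤ #D) :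
    uNum α ≤ uNum β := by
  obtain ⟨V, hV⟩ := exists_isBAUltrafilter β
  refine le_csInf ⟨_, V, hV, hV.not_isPrincipal hβ, V, subset_rfl,
    fun u hu => ⟨u, hu, le_rfl⟩, rfl⟩ ?_
  rintro _ ⟨V, hV, hVnp, D, hDV, hD, rfl⟩
  obtain ⟨U, D', hU, hD', hcard⟩ := h V D hV hVnp ⟨hDV, hD⟩
  refine (csInf_le' ?_).trans hcard
  exact ⟨U, hU, hU.not_isPrincipal hα, D', hD'.1, hD'.2, rfl⟩

theorem Set.Infinite.exists_subset_infinite_diff {ι : Type} {A : Set ι} (hA : A.Infinite) :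
    ∃ T ⊆ A, T.Infinite ∧ (A \ T).Infinite := by
  obtain ⟨T, T', hTT', hdisj, hcard⟩ := hA.exists_union_disjoint_cardinal_eq_of_infinite
  have hfin : T.Finite ↔ T'.Finite := by rw [← lt_aleph0_iff_set_finite, hcard,
    lt_aleph0_iff_set_finite]
  have hT : T.Infinite := fun hT => hA (hTT' ▸ hT.union (hfin.1 hT))
  refine ⟨T, hTT' ▸ subset_union_left, hT, ?_⟩
  rwa [← hTT', union_sdiff_left, hdisj.symm.sdiff_eq_left, Set.Infinite, ← hfin]

open Classical in
noncomputable def indicatorHom (ι B : Type) [BooleanAlgebra B] :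
    BoundedLatticeHom (Set ι) (ι → B) where
  toFun A i := if i ∈ A then ⊤ else ⊥
  map_sup' A A' := by ext i; by_cases h : i ∈ A <;> by_cases h' : i ∈ A' <;> simp [h, h']
  map_inf' A A' := by ext i; by_cases h : i ∈ A <;> by_cases h' : i ∈ A' <;> simp [h, h']
  map_top' := by ext i; simp
  map_bot' := by ext i; simp

theorem indicatorHom_of_mem {ι B : Type} [BooleanAlgebra B] {A : Set ι} {i : ι} (h : i ∈ A) :
    indicatorHom ι B A i = ⊤ := if_pos h

theorem indicatorHom_of_notMem {ι B : Type} [BooleanAlgebra B] {A : Set ι} {i : ι} (h : i ∉ A) :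
    indicatorHom ι B A i = ⊥ := if_neg h

namespace PomegaFin

noncomputable def mk : BoundedLatticeHom (Set ℕ) PomegaFin := quotHom finIdeal

theorem mk_surjective : Surjective mk := quotHom_surjective _

theorem mk_eq_bot_iff {A : Set ℕ} : mk A = ⊥ ↔ A.Finite := quotHom_eq_bot_iff _

theorem mk_le_mk_iff {A A' : Set ℕ} : mk A ≤ mk A' ↔ (A \ A').Finite := quotHom_le_quotHom_iff _

theorem not_isAtom (s : PomegaFin) : ¬ IsAtom s := by
  obtain ⟨A, rfl⟩ := mk_surjective s
  by_cases hA : A.Finite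
  · exact fun h => h.1 (mk_eq_bot_iff.2 hA)
  obtain ⟨T, hTA, hT, hAT⟩ := Set.Infinite.exists_subset_infinite_diff hA
  refine not_isAtom_of_inf_ne_bot (b := mk T) ?_ ?_
  · rwa [← map_inf, Ne, mk_eq_bot_iff, inf_eq_right.2 hTA]
  · rwa [← map_compl', ← map_inf, Ne, mk_eq_bot_iff, ← _root_.sdiff_eq]

end PomegaFin

namespace redPow

variable {B : Type} [BooleanAlgebra B]

variable (B) in
noncomputable def mk : BoundedLatticeHom (ℕ → B) (redPow B) := quotHom (finSuppIdeal B)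

variable (B) in
theorem mk_surjective : Surjective (mk B) := quotHom_surjective _

theorem mk_eq_bot_iff {x : ℕ → B} : mk B x = ⊥ ↔ {n | x n ≠ ⊥}.Finite := quotHom_eq_bot_iff _

theorem mk_le_mk_iff {x y : ℕ → B} : mk B x ≤ mk B y ↔ ∀ᶠ n in Filter.cofinite, x n ≤ y n := by
  refine (quotHom_le_quotHom_iff _).trans ?_
  rw [Filter.eventually_cofinite]
  change {n | (x \ y) n ≠ ⊥}.Finite ↔ _
  simp only [Pi.sdiff_apply, ne_eq, sdiff_eq_bot_iff]

instance [Nontrivial B] : Nontrivial (redPow B) :=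
  nontrivial_of_ne ⊥ ⊤ fun h => infinite_univ (α := ℕ) <| by
    rw [← map_top (mk B), eq_comm, mk_eq_bot_iff] at h
    simpa using h

theorem not_isAtom (s : redPow B) : ¬ IsAtom s := by
  obtain ⟨x, rfl⟩ := mk_surjective B s
  by_cases hx : {n | x n ≠ ⊥}.Finite
  · exact fun h => h.1 (mk_eq_bot_iff.2 hx)
  obtain ⟨T, hTx, hT, hxT⟩ := Set.Infinite.exists_subset_infinite_diff hx
  refine not_isAtom_of_inf_ne_bot (b := mk B (indicatorHom ℕ B T)) ?_ ?_
  · rw [← map_inf, Ne, mk_eq_bot_iff]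
    refine fun h => hT (h.subset fun n hn => ?_)
    simpa [indicatorHom_of_mem hn] using hTx hn
  · rw [← map_compl', ← map_compl', ← map_inf, Ne, mk_eq_bot_iff]
    refine fun h => hxT (h.subset fun n hn => ?_)
    simpa [indicatorHom_of_notMem hn.2] using hn.1

end redPow

theorem exists_pomegaFin_ultrafilter_base_of_redPow {B : Type} [BooleanAlgebra B]
    {V D : Set (redPow B)} (hV : IsBAUltrafilter V) (hD : IsFilterBase V D) :
    ∃ U D' : Set PomegaFin, IsBAUltrafilter U ∧ IsFilterBase U D' ∧ #D' ≤ #D := by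
  set χ := (redPow.mk B).comp (indicatorHom ℕ B)
  have hker : ∀ A ∈ χ ⁻¹' V, PomegaFin.mk A ≠ ⊥ := fun A hA hAfin => hV.ne_bot_of_mem hA <|
    redPow.mk_eq_bot_iff.2 <| (PomegaFin.mk_eq_bot_iff.1 hAfin).subset fun n hn => by
      by_contra hnA
      exact hn (indicatorHom_of_notMem hnA)
  choose x hx using redPow.mk_surjective B
  refine ⟨PomegaFin.mk '' (χ ⁻¹' V), (fun v => PomegaFin.mk {n | x v n ≠ ⊥}) '' D,
    (hV.comap χ).image hker PomegaFin.mk_surjective, ⟨?_, ?_⟩, mk_image_le⟩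
  · rintro _ ⟨v, hv, rfl⟩
    refine ⟨_, hV.mem_of_le (hD.1 hv) ((hx v).symm.trans_le
      (redPow.mk_le_mk_iff.2 (Filter.Eventually.of_forall fun n => ?_))), rfl⟩
    by_cases hn : x v n = ⊥
    · exact hn.le.trans bot_le
    · exact (indicatorHom_of_mem (B := B) (A := {n | x v n ≠ ⊥}) hn).symm ▸ le_top
  · rintro _ ⟨A, hA, rfl⟩
    obtain ⟨v, hvD, hvA⟩ := hD.2 _ hA
    refine ⟨_, ⟨v, hvD, rfl⟩, PomegaFin.mk_le_mk_iff.2 ?_⟩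
    rw [← hx v] at hvA
    refine (Filter.eventually_cofinite.1 (redPow.mk_le_mk_iff.1 hvA)).subset fun n hn hle => ?_
    exact hn.1 (le_bot_iff.1 (indicatorHom_of_notMem (B := B) hn.2 ▸ hle))

def constHom (ι B : Type) [BooleanAlgebra B] : BoundedLatticeHom B (ι → B) where
  toFun := const ι
  map_sup' _ _ := rfl
  map_inf' _ _ := rfl
  map_top' := rfl
  map_bot' := rfl

theorem exists_ultrafilter_base_of_redPow {B : Type} [BooleanAlgebra B]
    (hsup : ∀ S : Set B, ∃ a : B, IsLUB S a) {V D : Set (redPow B)} (hV : IsBAUltrafilter V)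
    (hVnp : ¬ IsPrincipal V) (hD : IsFilterBase V D) :
    ∃ U D' : Set B, IsBAUltrafilter U ∧ IsFilterBase U D' ∧ #D' ≤ #D := by
  choose sup hsup using hsup
  choose x hx using redPow.mk_surjective B
  set δ := (redPow.mk B).comp (constHom ℕ B)
  set tail : D × ℕ → B := fun p => sup (x p.1 '' Ici p.2)
  have hDinf : D.Infinite := fun hfin => hVnp (hV.isPrincipal_of_finite_base hD hfin)
  refine ⟨δ ⁻¹' V, range tail, hV.comap δ, ⟨?_, fun b hb => ?_⟩, ?_⟩
  · rintro _ ⟨⟨⟨v, hv⟩, m⟩, rfl⟩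
    refine hV.mem_of_le (hD.1 hv) ((hx v).symm.trans_le (redPow.mk_le_mk_iff.2 ?_))
    rw [Nat.cofinite_eq_atTop, Filter.eventually_atTop]
    exact ⟨m, fun n hn => (hsup _).1 ⟨n, hn, rfl⟩⟩
  · obtain ⟨v, hvD, hvb⟩ := hD.2 _ hb
    rw [← hx v] at hvb
    obtain ⟨m, hm⟩ := Filter.eventually_atTop.1
      (Nat.cofinite_eq_atTop ▸ redPow.mk_le_mk_iff.1 hvb)
    exact ⟨_, ⟨(⟨v, hvD⟩, m), rfl⟩, (hsup _).2 (by rintro _ ⟨n, hn, rfl⟩; exact hm n hn)⟩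
  · calc #(range tail) ≤ #(D × ℕ) := mk_range_le
      _ = #D := by
        rw [mk_prod, lift_id, lift_id, mk_nat,
          mul_aleph0_eq (aleph0_le_mk_iff.2 hDinf.to_subtype)]

section Partition

variable {α : Type} [BooleanAlgebra α]

theorem inf_le_of_isLUB {S : Set α} {s c u : α} (hs : IsLUB S s) (h : ∀ b ∈ S, b ⊓ c ≤ u) :
    s ⊓ c ≤ u := by
  have hs' : s ≤ u ⊔ cᶜ := hs.2 fun b hb => calc
    b = b ⊓ c ⊔ b ⊓ cᶜ := sup_inf_inf_compl.symm
    _ ≤ u ⊔ cᶜ := sup_le_sup (h b hb) inf_le_right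
  calc s ⊓ c ≤ (u ⊔ cᶜ) ⊓ c := inf_le_inf_right c hs'
    _ = u ⊓ c := by rw [inf_sup_right, compl_inf_self, sup_bot_eq]
    _ ≤ u := inf_le_left

variable {ι : Type} {a : ι → α}

theorem le_of_forall_inf_le (htop : IsLUB (range a) ⊤) {b c : α} (h : ∀ i, a i ⊓ b ≤ c) :
    b ≤ c := by
  simpa using inf_le_of_isLUB htop (by rintro _ ⟨i, rfl⟩; exact h i)

theorem eq_of_forall_inf_eq (htop : IsLUB (range a) ⊤) {b c : α} (h : ∀ i, a i ⊓ b = a i ⊓ c) :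
    b = c :=
  le_antisymm (le_of_forall_inf_le htop fun i => (h i).le.trans inf_le_right)
    (le_of_forall_inf_le htop fun i => (h i).ge.trans inf_le_right)

theorem exists_inf_eq_inf_apply (hsup : ∀ S : Set α, ∃ s : α, IsLUB S s)
    (hdisj : Pairwise (Disjoint on a)) (x : ι → α) : ∃ g, ∀ i, a i ⊓ g = a i ⊓ x i := by
  obtain ⟨g, hg⟩ := hsup (range fun j => a j ⊓ x j)
  refine ⟨g, fun i => le_antisymm (le_inf inf_le_left ?_) (le_inf inf_le_left (hg.1 ⟨i, rfl⟩))⟩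
  rw [inf_comm]
  refine inf_le_of_isLUB hg ?_
  rintro _ ⟨j, rfl⟩
  rcases eq_or_ne j i with rfl | hji
  · exact inf_le_left.trans inf_le_right
  · exact (inf_le_inf_right _ inf_le_left).trans ((hdisj hji).eq_bot ▸ bot_le)

section Glue

variable (hsup : ∀ S : Set α, ∃ s : α, IsLUB S s) (hdisj : Pairwise (Disjoint on a))

noncomputable def glue (x : ι → α) : α := (exists_inf_eq_inf_apply hsup hdisj x).choose

theorem inf_glue (x : ι → α) (i : ι) : a i ⊓ glue hsup hdisj x = a i ⊓ x i :=
  (exists_inf_eq_inf_apply hsup hdisj x).choose_spec i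

/-- Gluing along a partition of unity identifies a complete algebra with the product of its
relative algebras `[⊥, a i]`. -/
noncomputable def glueHom (htop : IsLUB (range a) ⊤) : BoundedLatticeHom (ι → α) α where
  toFun := glue hsup hdisj
  map_sup' x y := eq_of_forall_inf_eq htop fun i => by
    simp only [inf_sup_left, inf_glue, Pi.sup_apply]
  map_inf' x y := eq_of_forall_inf_eq htop fun i => by
    rw [inf_inf_distrib_left]
    simp only [inf_glue, Pi.inf_apply]
    exact inf_inf_distrib_left _ _ _
  map_top' := eq_of_forall_inf_eq htop fun i => by simp only [inf_glue, Pi.top_apply]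
  map_bot' := eq_of_forall_inf_eq htop fun i => by simp only [inf_glue, Pi.bot_apply]

end Glue

theorem BAAntichain.insert {A : Set α} {c : α} (hA : BAAntichain A) (hc : c ≠ ⊥)
    (h : ∀ b ∈ A, c ⊓ b = ⊥) : BAAntichain (insert c A) := by
  refine ⟨forall_mem_insert.2 ⟨hc, hA.1⟩, ?_⟩
  rintro b (rfl | hb) b' (rfl | hb') hbb'
  · exact absurd rfl hbb'
  · exact h b' hb'
  · exact inf_comm b b' ▸ h b hb
  · exact hA.2 b hb b' hb' hbb'

/-- A maximal antichain inside a dense set `S` has supremum `⊤`. -/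
theorem exists_antichain_subset_isLUB_top (hsup : ∀ S : Set α, ∃ s : α, IsLUB S s) {S : Set α}
    (hS : ∀ b : α, b ≠ ⊥ → ∃ c ≤ b, c ≠ ⊥ ∧ c ∈ S) :
    ∃ M ⊆ S, BAAntichain M ∧ IsLUB M ⊤ := by
  obtain ⟨M, hM⟩ := zorn_subset {M | M ⊆ S ∧ BAAntichain M} fun C hC hchain =>
    ⟨⋃₀ C, ⟨sUnion_subset fun M hM => (hC hM).1, fun b ⟨M, hM, hb⟩ => (hC hM).2.1 b hb,
      hchain.pairwise_sUnion.2 fun M hM => (hC hM).2.2⟩, fun _ => subset_sUnion_of_mem⟩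
  obtain ⟨s, hs⟩ := hsup M
  refine ⟨M, hM.1.1, hM.1.2, ?_⟩
  convert hs
  by_contra! hs_top
  obtain ⟨c, hcs, hc, hcS⟩ := hS sᶜ fun h => hs_top (compl_eq_bot.1 h).symm
  have hdisj : ∀ b ∈ M, c ⊓ b = ⊥ := fun b hb =>
    le_bot_iff.1 ((inf_le_inf hcs (hs.1 hb)).trans (compl_inf_self s).le)
  have hcM : c ∈ M := hM.eq_of_subset ⟨insert_subset hcS hM.1.1, hM.1.2.insert hc hdisj⟩
    (subset_insert c M) ▸ mem_insert c M
  exact hc (inf_idem c ▸ hdisj c hcM)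

theorem IsBAUltrafilter.exists_partition_notMem (hsup : ∀ S : Set α, ∃ s : α, IsLUB S s)
    (hatom : ∀ a : α, ¬ IsAtom a) (hccc : CCC α) {U : Set α} (hU : IsBAUltrafilter U) :
    ∃ a : ℕ → α, Pairwise (Disjoint on a) ∧ IsLUB (range a) ⊤ ∧ ∀ n, a n ∉ U := by
  obtain ⟨M, hMU, hM, hMtop⟩ := exists_antichain_subset_isLUB_top hsup fun b hb =>
    hU.exists_le_notMem hatom hb
  have hMinf : M.Infinite := fun hfin => by
    obtain ⟨t, rfl⟩ := hfin.exists_finset_coe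
    have hlub : IsLUB (t : Set α) (t.sup id) := by simpa using Finset.isLUB_sup (s := t) (f := id)
    exact hU.finset_sup_notMem (fun b hb => hMU hb) (hlub.unique hMtop ▸ hU.top_mem)
  obtain ⟨_⟩ := countable_infinite_iff_nonempty_denumerable.1 ⟨hccc M hM, hMinf⟩
  set e := (Denumerable.eqv M).symm
  have hrange : range (fun n => (e n : α)) = M := by
    rw [range_comp' Subtype.val e, e.range_eq_univ, image_univ, Subtype.range_coe]
  refine ⟨fun n => e n, fun m n hmn => disjoint_iff.2 (hM.2 _ (e m).2 _ (e n).2 ?_),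
    hrange.symm ▸ hMtop, fun n => hMU (e n).2⟩
  exact fun h => hmn (e.injective (Subtype.ext h))

end Partition

theorem exists_redPow_ultrafilter_base {B : Type} [BooleanAlgebra B]
    (hsup : ∀ S : Set B, ∃ a : B, IsLUB S a) (hatom : ∀ a : B, ¬ IsAtom a) (hccc : CCC B)
    {U D : Set B} (hU : IsBAUltrafilter U) (hD : IsFilterBase U D) :
    ∃ V D' : Set (redPow B), IsBAUltrafilter V ∧ IsFilterBase V D' ∧ #D' ≤ #D := by
  obtain ⟨a, hdisj, htop, haU⟩ := hU.exists_partition_notMem hsup hatom hccc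
  set g := glueHom hsup hdisj htop
  have hker : ∀ x ∈ g ⁻¹' U, redPow.mk B x ≠ ⊥ := fun x hx hfin => by
    refine hU.finset_sup_notMem (s := (redPow.mk_eq_bot_iff.1 hfin).toFinset)
      (fun n _ => haU n) (hU.mem_of_le hx (le_of_forall_inf_le htop fun n => ?_))
    refine (inf_glue hsup hdisj x n).trans_le ?_
    by_cases hn : x n = ⊥
    · simp [hn]
    · exact inf_le_left.trans (Finset.le_sup ((redPow.mk_eq_bot_iff.1 hfin).mem_toFinset.2 hn))
  have hglue : ∀ d, g (fun n => a n ⊓ d) = d := fun d => eq_of_forall_inf_eq htop fun n =>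
    (inf_glue hsup hdisj _ n).trans (by rw [← inf_assoc, inf_idem])
  refine ⟨redPow.mk B '' (g ⁻¹' U), (fun d => redPow.mk B fun n => a n ⊓ d) '' D,
    (hU.comap g).image hker (redPow.mk_surjective B), ⟨?_, ?_⟩, mk_image_le⟩
  · rintro _ ⟨d, hd, rfl⟩
    exact ⟨_, show g _ ∈ U from (hglue d).symm ▸ hD.1 hd, rfl⟩
  · rintro _ ⟨x, hx, rfl⟩
    obtain ⟨d, hd, hdx⟩ := hD.2 _ hx
    refine ⟨_, ⟨d, hd, rfl⟩, redPow.mk_le_mk_iff.2 (Filter.Eventually.of_forall fun n => ?_)⟩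
    calc a n ⊓ d ≤ a n ⊓ g x := inf_le_inf_left _ hdx
      _ = a n ⊓ x n := inf_glue hsup hdisj x n
      _ ≤ x n := inf_le_right

/-- `𝔲 ≤ 𝔲(ωB/Fin)`; and if `B` is complete, atomless and c.c.c., then
`𝔲(ωB/Fin) = 𝔲(B)`. -/
theorem stmt18 (B : Type) [BooleanAlgebra B] [Nontrivial B] :
    uNum PomegaFin ≤ uNum (redPow B) ∧
      ((∀ S : Set B, ∃ a : B, IsLUB S a) → (∀ a : B, ¬ IsAtom a) → CCC B →
        uNum (redPow B) = uNum B) := by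
  refine ⟨uNum_le_uNum PomegaFin.not_isAtom redPow.not_isAtom fun _ _ hV _ hD =>
    exists_pomegaFin_ultrafilter_base_of_redPow hV hD, fun hsup hatom hccc => le_antisymm ?_ ?_⟩
  · exact uNum_le_uNum redPow.not_isAtom hatom fun _ _ hU _ hD =>
      exists_redPow_ultrafilter_base hsup hatom hccc hU hD
  · exact uNum_le_uNum hatom redPow.not_isAtom fun _ _ hV hVnp hD =>
      exists_ultrafilter_base_of_redPow hsup hV hVnp hD
end
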